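/- arXiv:1806.07682 — 4 statements merged into one kernel-verified Lean document; each statement's English description precedes it below -/
import Mathlib

section
/- Let A be an n×n real strictly diagonally dominant matrix. Fix m < n and let A = T_m − E_m − F_m be the banded decomposition. Then T_m − E_m is invertible and every complex eigenvalue λ of (T_m − E_m)⁻¹ F_m satisfies |λ| < 1 (so the generalized Gauss–Seidel iteration converges for every initial guess). -/
open Matrix Finset

/-!
The lower part `L = T_m - E_m` keeps the diagonal of `A` and drops some off-diagonal entries, so it
inherits strict diagonal dominance and is invertible (Lévy–Desplanques). If `L⁻¹ F v = λ v` with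
`v ≠ 0` and `|λ| ≥ 1`, then `(λ L - F) v = 0`. But row `i` of `λ L - F` has diagonal entry
`λ a_ii` and off-diagonal entries of modulus at most `|λ| |a_ij|`, so `λ L - F` is again strictly
diagonally dominant, hence nonsingular: a contradiction.
-/

namespace Matrix

variable {ι : Type*}

structure IsEntrywiseSplitting {R : Type*} [Zero R] [Neg R] (A L F : Matrix ι ι R) : Prop where
  diag : ∀ i, L i i = A i i
  entry : ∀ i j, (L i j = A i j ∧ F i j = 0) ∨ (L i j = 0 ∧ F i j = -A i j)

theorem IsEntrywiseSplitting.right_diag {R : Type*} [NegZeroClass R] {A L F : Matrix ι ι R}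
    (h : IsEntrywiseSplitting A L F) (i : ι) : F i i = 0 := by
  rcases h.entry i i with ⟨-, hF⟩ | ⟨hL, hF⟩
  · exact hF
  · rw [hF, ← h.diag, hL, neg_zero]

theorem IsEntrywiseSplitting.map {R S Φ : Type*} [AddGroup R] [AddGroup S] [FunLike Φ R S]
    [AddMonoidHomClass Φ R S] {A L F : Matrix ι ι R} (h : IsEntrywiseSplitting A L F) (f : Φ) :
    IsEntrywiseSplitting (A.map f) (L.map f) (F.map f) where
  diag i := by simp only [map_apply, h.diag i]
  entry i j := by
    rcases h.entry i j with ⟨hL, hF⟩ | ⟨hL, hF⟩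
    · exact .inl ⟨by simp [hL], by simp [hF]⟩
    · exact .inr ⟨by simp [hL], by simp [hF]⟩

variable [Fintype ι] [DecidableEq ι]

def IsStrictDiagDominant {R : Type*} [Norm R] (A : Matrix ι ι R) : Prop :=
  ∀ i, ∑ j ∈ univ.erase i, ‖A i j‖ < ‖A i i‖

theorem IsStrictDiagDominant.isUnit {K : Type*} [NormedField K] {A : Matrix ι ι K}
    (hA : A.IsStrictDiagDominant) : IsUnit A :=
  (isUnit_iff_isUnit_det A).mpr (det_ne_zero_of_sum_row_lt_diag hA).isUnit

theorem IsStrictDiagDominant.of_norm_le {R S : Type*} [Norm R] [Norm S] {A : Matrix ι ι R}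
    {B : Matrix ι ι S} (hA : A.IsStrictDiagDominant) {c : ℝ} (hc : 0 < c)
    (hdiag : ∀ i, ‖B i i‖ = c * ‖A i i‖) (hle : ∀ i j, ‖B i j‖ ≤ c * ‖A i j‖) :
    B.IsStrictDiagDominant := fun i =>
  calc ∑ j ∈ univ.erase i, ‖B i j‖
      ≤ ∑ j ∈ univ.erase i, c * ‖A i j‖ := sum_le_sum fun j _ => hle i j
    _ = c * ∑ j ∈ univ.erase i, ‖A i j‖ := (mul_sum ..).symm
    _ < c * ‖A i i‖ := mul_lt_mul_of_pos_left (hA i) hc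
    _ = ‖B i i‖ := (hdiag i).symm

namespace IsEntrywiseSplitting

variable {R : Type*} [NormedRing R] {A L F : Matrix ι ι R}

theorem isStrictDiagDominant_left (h : IsEntrywiseSplitting A L F)
    (hA : A.IsStrictDiagDominant) : L.IsStrictDiagDominant :=
  hA.of_norm_le one_pos (fun i => by rw [h.diag, one_mul]) fun i j => by
    rcases h.entry i j with ⟨hL, -⟩ | ⟨hL, -⟩ <;> simp [hL]

theorem isStrictDiagDominant_smul_sub {K : Type*} [NormedDivisionRing K] {A L F : Matrix ι ι K}
    (h : IsEntrywiseSplitting A L F) (hA : A.IsStrictDiagDominant) {lam : K} (hlam : 1 ≤ ‖lam‖) :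
    (lam • L - F).IsStrictDiagDominant := by
  refine hA.of_norm_le (c := ‖lam‖) (by linarith) (fun i => ?_) fun i j => ?_
  · simp [h.diag, h.right_diag]
  · rcases h.entry i j with ⟨hL, hF⟩ | ⟨hL, hF⟩
    · simp [hL, hF]
    · simpa [hL, hF] using le_mul_of_one_le_left (norm_nonneg _) hlam

end IsEntrywiseSplitting

theorem smul_map_sub_map_mulVec_eq_zero {R S : Type*} [CommRing R] [CommRing S] (f : R →+* S)
    {L F : Matrix ι ι R} (hL : IsUnit L.det) {lam : S} {v : ι → S}
    (hv : (L⁻¹ * F).map f *ᵥ v = lam • v) : (lam • L.map f - F.map f) *ᵥ v = 0 := by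
  have hLF : L.map f * (L⁻¹ * F).map f = F.map f := by
    rw [← Matrix.map_mul, ← Matrix.mul_assoc, mul_nonsing_inv L hL, Matrix.one_mul]
  rw [sub_mulVec, smul_mulVec, ← hLF, ← mulVec_mulVec, hv, mulVec_smul, sub_self]

end Matrix

theorem isEntrywiseSplitting_banded {n m : ℕ} {A T E F : Matrix (Fin n) (Fin n) ℝ}
    (hT : ∀ i j, T i j = if |(i : ℤ) - (j : ℤ)| ≤ (m : ℤ) then A i j else 0)
    (hE : ∀ i j, E i j = if (j : ℤ) + (m : ℤ) < (i : ℤ) then -A i j else 0)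
    (hF : ∀ i j, F i j = if (i : ℤ) + (m : ℤ) < (j : ℤ) then -A i j else 0) :
    IsEntrywiseSplitting A (T - E) F where
  diag i := by simp [hT, hE]
  entry i j := by
    simp only [Matrix.sub_apply, hT, hE, hF, abs_sub_le_iff]
    split_ifs <;> first | omega | exact .inl ⟨by ring, rfl⟩ | exact .inr ⟨by ring, rfl⟩

theorem ggs_converges_of_sdd_general (n m : ℕ)
    (A T E F : Matrix (Fin n) (Fin n) ℝ)
    (hSDD : ∀ i, ∑ j ∈ Finset.univ.erase i, |A i j| < |A i i|)
(hT : ∀ i j, T i j = if |(i : ℤ) - (j : ℤ)| ≤ (m : ℤ) then A i j else 0)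
    (hE : ∀ i j, E i j = if (j : ℤ) + (m : ℤ) < (i : ℤ) then -A i j else 0)
    (hF : ∀ i j, F i j = if (i : ℤ) + (m : ℤ) < (j : ℤ) then -A i j else 0) :
    IsUnit (T - E) ∧
      ∀ (lam : ℂ) (v : Fin n → ℂ), v ≠ 0 →
        (((T - E)⁻¹ * F).map (Complex.ofReal)).mulVec v = lam • v →
        ‖lam‖ < 1 := by
  have hsplit := isEntrywiseSplitting_banded hT hE hF
  have hA : A.IsStrictDiagDominant := by simpa only [IsStrictDiagDominant, Real.norm_eq_abs]
  have hL : IsUnit (T - E) := (hsplit.isStrictDiagDominant_left hA).isUnit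
  refine ⟨hL, fun lam v hv heig => ?_⟩
  by_contra! hlam
  have hAc : (A.map Complex.ofRealHom).IsStrictDiagDominant :=
    hA.of_norm_le one_pos (fun i => by simp) fun i j => by simp
  have hM := (hsplit.map Complex.ofRealHom).isStrictDiagDominant_smul_sub hAc hlam
  have hMv := smul_map_sub_map_mulVec_eq_zero Complex.ofRealHom
    ((isUnit_iff_isUnit_det _).mp hL) heig
  exact hv (mulVec_injective_iff_isUnit.mpr hM.isUnit (by rw [hMv, mulVec_zero]))

/-- Generalized Gauss–Seidel converges for strictly diagonally dominant matrices. -/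
theorem ggs_converges_of_sdd (n m : ℕ) (hm : m < n)
    (A T E F : Matrix (Fin n) (Fin n) ℝ)
    (hSDD : ∀ i, ∑ j ∈ Finset.univ.erase i, |A i j| < |A i i|)
(hT : ∀ i j, T i j = if |(i : ℤ) - (j : ℤ)| ≤ (m : ℤ) then A i j else 0)
    (hE : ∀ i j, E i j = if (j : ℤ) + (m : ℤ) < (i : ℤ) then -A i j else 0)
    (hF : ∀ i j, F i j = if (i : ℤ) + (m : ℤ) < (j : ℤ) then -A i j else 0) :
    IsUnit (T - E) ∧
      ∀ (lam : ℂ) (v : Fin n → ℂ), v ≠ 0 →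
        (((T - E)⁻¹ * F).map (Complex.ofReal)).mulVec v = lam • v →
        ‖lam‖ < 1 :=
  ggs_converges_of_sdd_general n m A T E F hSDD hT hE hF
end

section
/- Let A be an n×n real H-matrix, i.e. its comparison matrix M(A), defined by M(A)_{ii} = |a_{ii}| and M(A)_{ij} = −|a_{ij}| for i ≠ j, is a nonsingular M-matrix. Fix m < n and let A = T_m − E_m − F_m be the banded decomposition. Then T_m − E_m is invertible and every complex eigenvalue λ of (T_m − E_m)⁻¹ F_m satisfies |λ| < 1 (the generalized Gauss–Seidel method converges for every initial guess). -/
open Matrix Finset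

/-!
Since `M(A)` is a nonsingular M-matrix, `u = M(A)⁻¹ 𝟙` is a positive vector with `M(A) u = 𝟙`, i.e.
`A` is strictly diagonally dominant with respect to the weights `u`. For `‖λ‖ ≥ 1` every entry of
`λ (T_m - E_m) - F_m` is `λ a_ij`, `a_ij` or `0`, and its diagonal is `λ a_ii`, so this matrix is
again strictly diagonally dominant with respect to `u`, hence nonsingular (Lévy–Desplanques after
scaling the columns by `u`); so `λ` cannot be an eigenvalue of `(T_m - E_m)⁻¹ F_m`. The case
`λ = 1, F_m ↦ 0` gives the invertibility of `T_m - E_m`.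
-/

namespace Matrix

variable {ι K : Type*} [Fintype ι] [DecidableEq ι] [RCLike K]

theorem det_ne_zero_of_weighted_sum_row_lt_diag {B : Matrix ι ι K} {u : ι → ℝ}
    (hu : ∀ i, 0 < u i) (h : ∀ i, ∑ j ∈ univ.erase i, ‖B i j‖ * u j < ‖B i i‖ * u i) :
    B.det ≠ 0 := by
  have hnorm : ∀ j, ‖(u j : K)‖ = u j := fun j => by
    rw [RCLike.norm_ofReal, abs_of_pos (hu j)]
  have hscaled : (B * diagonal fun j => (u j : K)).det ≠ 0 :=
    det_ne_zero_of_sum_row_lt_diag fun i => by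
      simpa only [mul_diagonal, norm_mul, hnorm] using h i
  rw [det_mul] at hscaled
  exact left_ne_zero_of_mul hscaled

theorem det_ne_zero_of_norm_le_mul_abs {A : Matrix ι ι ℝ} {B : Matrix ι ι K} {u : ι → ℝ}
    (hu : ∀ i, 0 < u i) (hA : ∀ i, ∑ j ∈ univ.erase i, |A i j| * u j < |A i i| * u i)
    {c : ℝ} (hc : 0 < c) (hdiag : ∀ i, ‖B i i‖ = c * |A i i|)
    (hoff : ∀ i j, j ≠ i → ‖B i j‖ ≤ c * |A i j|) : B.det ≠ 0 :=
  det_ne_zero_of_weighted_sum_row_lt_diag hu fun i => calc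
    ∑ j ∈ univ.erase i, ‖B i j‖ * u j ≤ ∑ j ∈ univ.erase i, c * (|A i j| * u j) :=
      sum_le_sum fun j hj => by
        rw [← mul_assoc]
        exact mul_le_mul_of_nonneg_right (hoff i j (ne_of_mem_erase hj)) (hu j).le
    _ = c * ∑ j ∈ univ.erase i, |A i j| * u j := (mul_sum _ _ _).symm
    _ < c * (|A i i| * u i) := mul_lt_mul_of_pos_left (hA i) hc
    _ = ‖B i i‖ * u i := by rw [hdiag, mul_assoc]

theorem comparison_mulVec_apply {A MA : Matrix ι ι ℝ}
    (hMA : ∀ i j, MA i j = if i = j then |A i i| else -|A i j|) (u : ι → ℝ) (i : ι) :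
    (MA *ᵥ u) i = |A i i| * u i - ∑ j ∈ univ.erase i, |A i j| * u j := by
  rw [mulVec, dotProduct, ← add_sum_erase _ _ (mem_univ i), hMA, if_pos rfl, sub_eq_add_neg,
    ← sum_neg_distrib]
  refine congrArg _ (sum_congr rfl fun j hj => ?_)
  rw [hMA, if_neg (ne_of_mem_erase hj).symm, neg_mul]

theorem exists_pos_weighted_sum_row_lt_diag_of_comparison {A MA : Matrix ι ι ℝ}
    (hMA : ∀ i j, MA i j = if i = j then |A i i| else -|A i j|) (hunit : IsUnit MA)
    (hinv : ∀ i j, 0 ≤ MA⁻¹ i j) :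
    ∃ u : ι → ℝ, (∀ i, 0 < u i) ∧ ∀ i, ∑ j ∈ univ.erase i, |A i j| * u j < |A i i| * u i := by
  set u := MA⁻¹ *ᵥ fun _ => (1 : ℝ)
  have hu_nonneg : ∀ i, 0 ≤ u i := fun i =>
    sum_nonneg fun j _ => mul_nonneg (hinv i j) zero_le_one
  have hMAu : ∀ i, |A i i| * u i - ∑ j ∈ univ.erase i, |A i j| * u j = 1 := fun i => by
    rw [← comparison_mulVec_apply hMA, mulVec_mulVec,
      mul_nonsing_inv _ ((isUnit_iff_isUnit_det _).mp hunit), one_mulVec]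
  have hdom : ∀ i, ∑ j ∈ univ.erase i, |A i j| * u j < |A i i| * u i := fun i => by
    linarith [hMAu i]
  refine ⟨u, fun i => ?_, hdom⟩
  have hdiag_pos : 0 < |A i i| * u i :=
    (sum_nonneg fun j _ => mul_nonneg (abs_nonneg _) (hu_nonneg j)).trans_lt (hdom i)
  exact pos_of_mul_pos_right hdiag_pos (abs_nonneg _)


def IsDisjointSplitting {R : Type*} [Zero R] [Neg R] (A L U : Matrix ι ι R) : Prop :=
  ∀ i j, (U i j = 0 ∧ L i j = A i j) ∨ (j ≠ i ∧ L i j = 0 ∧ U i j = -A i j)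

theorem IsDisjointSplitting.det_smul_map_sub_smul_map_ne_zero {A L U : Matrix ι ι ℝ}
    (hs : IsDisjointSplitting A L U) {u : ι → ℝ} (hu : ∀ i, 0 < u i)
    (hA : ∀ i, ∑ j ∈ univ.erase i, |A i j| * u j < |A i i| * u i) {a b : K} (ha : a ≠ 0)
    (hab : ‖b‖ ≤ ‖a‖) : (a • L.map (algebraMap ℝ K) - b • U.map (algebraMap ℝ K)).det ≠ 0 := by
  refine det_ne_zero_of_norm_le_mul_abs hu hA (norm_pos_iff.mpr ha) (fun i => ?_) fun i j hji => ?_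
  · obtain ⟨hU, hL⟩ | ⟨hii, -⟩ := hs i i
    · simp [hU, hL]
    · exact absurd rfl hii
  · obtain ⟨hU, hL⟩ | ⟨-, hL, hU⟩ := hs i j
    · simp [hU, hL]
    · simpa [hU, hL] using mul_le_mul_of_nonneg_right hab (abs_nonneg (A i j))

theorem mulVec_smul_map_sub_map_eq_zero {L U : Matrix ι ι ℝ} (hL : IsUnit L) {lam : K}
    {v : ι → K} (hv : (L⁻¹ * U).map (algebraMap ℝ K) *ᵥ v = lam • v) :
    (lam • L.map (algebraMap ℝ K) - U.map (algebraMap ℝ K)) *ᵥ v = 0 := by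
  have hLU : L.map (algebraMap ℝ K) * (L⁻¹ * U).map (algebraMap ℝ K) = U.map (algebraMap ℝ K) := by
    rw [← Matrix.map_mul, ← Matrix.mul_assoc,
      mul_nonsing_inv _ ((isUnit_iff_isUnit_det _).mp hL), Matrix.one_mul]
  rw [sub_mulVec, smul_mulVec, ← hLU, ← mulVec_mulVec, hv, mulVec_smul, sub_self]

end Matrix

theorem isDisjointSplitting_banded {n m : ℕ} {A T E F : Matrix (Fin n) (Fin n) ℝ}
    (hT : ∀ i j, T i j = if |(i : ℤ) - (j : ℤ)| ≤ (m : ℤ) then A i j else 0)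
    (hE : ∀ i j, E i j = if (j : ℤ) + (m : ℤ) < (i : ℤ) then -A i j else 0)
    (hF : ∀ i j, F i j = if (i : ℤ) + (m : ℤ) < (j : ℤ) then -A i j else 0) :
    IsDisjointSplitting A (T - E) F := by
  intro i j
  simp only [Matrix.sub_apply, hT, hE, hF, abs_sub_le_iff]
  by_cases hij : (i : ℤ) + m < j
  · right
    refine ⟨fun h => by omega, ?_⟩
    split_ifs <;> first | omega | simp
  · left
    split_ifs <;> first | omega | simp

theorem ggs_converges_of_Hmatrix_general (n m : ℕ)
    (A MA T E F : Matrix (Fin n) (Fin n) ℝ)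
    (hMA : ∀ i j, MA i j = if i = j then |A i i| else -|A i j|)
    (hMAunit : IsUnit MA)
    (hMAinv : ∀ i j, 0 ≤ MA⁻¹ i j)
(hT : ∀ i j, T i j = if |(i : ℤ) - (j : ℤ)| ≤ (m : ℤ) then A i j else 0)
    (hE : ∀ i j, E i j = if (j : ℤ) + (m : ℤ) < (i : ℤ) then -A i j else 0)
    (hF : ∀ i j, F i j = if (i : ℤ) + (m : ℤ) < (j : ℤ) then -A i j else 0) :
    IsUnit (T - E) ∧
      ∀ (lam : ℂ) (v : Fin n → ℂ), v ≠ 0 →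
        (((T - E)⁻¹ * F).map (Complex.ofReal)).mulVec v = lam • v →
        ‖lam‖ < 1 := by
  obtain ⟨u, hu, hdom⟩ := exists_pos_weighted_sum_row_lt_diag_of_comparison hMA hMAunit hMAinv
  have hdet : ∀ a b : ℂ, a ≠ 0 → ‖b‖ ≤ ‖a‖ →
      (a • (T - E).map (algebraMap ℝ ℂ) - b • F.map (algebraMap ℝ ℂ)).det ≠ 0 :=
    fun a b ha hab => (isDisjointSplitting_banded hT hE hF).det_smul_map_sub_smul_map_ne_zero
      hu hdom ha hab
  have hTE : IsUnit (T - E) := by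
    have h := hdet 1 0 one_ne_zero (by simp)
    rw [one_smul, zero_smul, sub_zero, ← RingHom.mapMatrix_apply, ← RingHom.map_det] at h
    exact (isUnit_iff_isUnit_det _).mpr (isUnit_iff_ne_zero.mpr fun h0 => h (by simp [h0]))
  refine ⟨hTE, fun lam v hv hev => ?_⟩
  by_contra! hlam
  have h := hdet lam 1 (norm_pos_iff.mp (one_pos.trans_le hlam)) (by simpa using hlam)
  rw [one_smul] at h
  exact h (exists_mulVec_eq_zero_iff.mp ⟨v, hv, mulVec_smul_map_sub_map_eq_zero hTE hev⟩)

/-- Generalized Gauss–Seidel converges for H-matrices. -/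
theorem ggs_converges_of_Hmatrix (n m : ℕ) (hm : m < n)
    (A MA T E F : Matrix (Fin n) (Fin n) ℝ)
    (hMA : ∀ i j, MA i j = if i = j then |A i i| else -|A i j|)
    (hMAunit : IsUnit MA)
    (hMAinv : ∀ i j, 0 ≤ MA⁻¹ i j)
(hT : ∀ i j, T i j = if |(i : ℤ) - (j : ℤ)| ≤ (m : ℤ) then A i j else 0)
    (hE : ∀ i j, E i j = if (j : ℤ) + (m : ℤ) < (i : ℤ) then -A i j else 0)
    (hF : ∀ i j, F i j = if (i : ℤ) + (m : ℤ) < (j : ℤ) then -A i j else 0) :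
    IsUnit (T - E) ∧
      ∀ (lam : ℂ) (v : Fin n → ℂ), v ≠ 0 →
        (((T - E)⁻¹ * F).map (Complex.ofReal)).mulVec v = lam • v →
        ‖lam‖ < 1 :=
  ggs_converges_of_Hmatrix_general n m A MA T E F hMA hMAunit hMAinv hT hE hF
end

section
/- Let A be an n×n nonsingular M-matrix, fix m < n with banded decomposition A = T_m − E_m − F_m (so T_m is invertible), and let r ≥ 0 be such that every complex eigenvalue of the generalized Jacobi matrix T_m⁻¹(E_m + F_m) has modulus ≤ r. Suppose 0 < ω < 2/(1 + r) and that every complex eigenvalue of T_m⁻¹ E_m has modulus < 1/ω. Then T_m − ω E_m is invertible and every complex eigenvalue λ of the GSOR iteration matrix (T_m − ω E_m)⁻¹[(1−ω)T_m + ω F_m] satisfies |λ| < 1 (GSOR converges for every initial guess). -/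
/-!
`T` is a Z-matrix dominating the nonsingular M-matrix `A` entrywise, so a minimum principle
with the positive vector `A⁻¹ 1` shows that `T` is again a nonsingular M-matrix. Thus
`A = T - (E + F)` is a regular splitting and the Jacobi matrix `G = T⁻¹ (E + F) ≥ 0` has
spectral radius `ρ < 1`; the hypothesis on its eigenvalues gives `ρ ≤ r`.

If `λ` is a GSOR eigenvalue, then `(λ + ω - 1) / (λ ω)` is an eigenvalue of `T⁻¹ (E + λ⁻¹ F)`.
For `|λ| ≥ 1` this matrix is entrywise dominated by `G`, so Gelfand's formula gives
`|λ + ω - 1| ≤ ω ρ |λ|`, whence `|λ| (1 - ω ρ) ≤ |1 - ω| < 1 - ω ρ`: the last inequality is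
`ρ < 1` when `ω ≤ 1` and `ω (1 + r) < 2` when `ω > 1`. Hence `|λ| < 1`.
-/

open Matrix Finset

open scoped ENNReal

theorem spectrum.spectralRadius_le_of_forall_nnnorm_pow_le {A : Type*} [NormedRing A]
    [NormedAlgebra ℂ A] [CompleteSpace A] {a b : A} (h : ∀ k : ℕ, ‖a ^ k‖₊ ≤ ‖b ^ k‖₊) :
    spectralRadius ℂ a ≤ spectralRadius ℂ b :=
  le_of_tendsto_of_tendsto' (spectrum.pow_nnnorm_pow_one_div_tendsto_nhds_spectralRadius a)
    (spectrum.pow_nnnorm_pow_one_div_tendsto_nhds_spectralRadius b)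
    fun k => ENNReal.rpow_le_rpow (ENNReal.coe_le_coe.mpr (h k)) (by positivity)

namespace Matrix

variable {ι : Type*} [Fintype ι]

theorem nonneg_of_mulVec_nonneg {T : Matrix ι ι ℝ} {x u : ι → ℝ}
    (hT : ∀ i j, i ≠ j → T i j ≤ 0) (hx : ∀ i, 0 < x i) (hTx : ∀ i, 0 < (T *ᵥ x) i)
    (hTu : ∀ i, 0 ≤ (T *ᵥ u) i) (i : ι) : 0 ≤ u i := by
  by_contra! hui
  obtain ⟨k, -, hk⟩ := exists_min_image univ (fun j => u j / x j) ⟨i, mem_univ i⟩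
  have hs : 0 < -(u k / x k) :=
    neg_pos.mpr ((hk i (mem_univ i)).trans_lt (div_neg_of_neg_of_pos hui (hx i)))
  replace hk : ∀ j, u k / x k * x j ≤ u j := fun j =>
    (le_div_iff₀ (hx j)).mp (hk j (mem_univ j))
  -- `w ≥ 0` vanishes at `k`, so row `k` of a Z-matrix cannot map it to a positive value
  set w := u + (-(u k / x k)) • x
  have hw : ∀ j, 0 ≤ w j := fun j => by
    simp only [w, Pi.add_apply, Pi.smul_apply, smul_eq_mul]
    linarith [hk j]
  have hwk : w k = 0 := by
    simp only [w, Pi.add_apply, Pi.smul_apply, smul_eq_mul]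
    field_simp [(hx k).ne']
    ring
  have hTw_nonpos : (T *ᵥ w) k ≤ 0 := by
    refine sum_nonpos fun j _ => ?_
    rcases eq_or_ne k j with rfl | hkj
    · simp [hwk]
    · exact mul_nonpos_of_nonpos_of_nonneg (hT k j hkj) (hw j)
  have hTw_pos : 0 < (T *ᵥ w) k := by
    simp only [w, mulVec_add, mulVec_smul, Pi.add_apply, Pi.smul_apply, smul_eq_mul]
    nlinarith [hTu k, hTx k]
  linarith

theorem norm_mul_apply_le {R : Type*} [NormedRing R] {P Q : Matrix ι ι R}
    {P' Q' : Matrix ι ι ℝ} (hP : ∀ i j, ‖P i j‖ ≤ P' i j) (hQ : ∀ i j, ‖Q i j‖ ≤ Q' i j)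
    (i j : ι) : ‖(P * Q) i j‖ ≤ (P' * Q') i j :=
  (norm_sum_le _ _).trans <| sum_le_sum fun k _ => (norm_mul_le _ _).trans <|
    mul_le_mul (hP i k) (hQ k j) (norm_nonneg _) ((norm_nonneg _).trans (hP i k))

theorem mul_apply_nonneg {P Q : Matrix ι ι ℝ} (hP : ∀ i j, 0 ≤ P i j) (hQ : ∀ i j, 0 ≤ Q i j)
    (i j : ι) : 0 ≤ (P * Q) i j :=
  sum_nonneg fun k _ => mul_nonneg (hP i k) (hQ k j)

variable [DecidableEq ι]

theorem mulVec_pos_of_isUnit_of_nonneg {M : Matrix ι ι ℝ} (hM : IsUnit M) (hM0 : ∀ i j, 0 ≤ M i j)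
    {y : ι → ℝ} (hy : ∀ i, 0 < y i) (i : ι) : 0 < (M *ᵥ y) i := by
  refine sum_pos' (fun j _ => mul_nonneg (hM0 i j) (hy j).le) ?_
  by_contra! hrow
  have hrow : ∀ j, M i j = 0 := fun j =>
    (nonpos_of_mul_nonpos_left (hrow j (mem_univ j)) (hy j)).antisymm (hM0 i j)
  exact (isUnit_iff_isUnit_det M).mp hM |>.ne_zero (det_eq_zero_of_row_eq_zero i hrow)

theorem isUnit_and_inv_nonneg_of_le {A T : Matrix ι ι ℝ} (hA : IsUnit A)
    (hAinv : ∀ i j, 0 ≤ A⁻¹ i j) (hT : ∀ i j, i ≠ j → T i j ≤ 0)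
    (hAT : ∀ i j, A i j ≤ T i j) : IsUnit T ∧ ∀ i j, 0 ≤ T⁻¹ i j := by
  set x := A⁻¹ *ᵥ fun _ => (1 : ℝ)
  have hx : ∀ i, 0 < x i := mulVec_pos_of_isUnit_of_nonneg (isUnit_nonsing_inv_iff.mpr hA) hAinv
    fun _ => one_pos
  have hTx : ∀ i, 0 < (T *ᵥ x) i := fun i => by
    have hAx : A *ᵥ x = fun _ => 1 := by
      rw [mulVec_mulVec, mul_nonsing_inv _ ((isUnit_iff_isUnit_det A).mp hA), one_mulVec]
    have : 0 ≤ ((T - A) *ᵥ x) i :=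
      sum_nonneg fun j _ => mul_nonneg (sub_nonneg.mpr (hAT i j)) (hx j).le
    rw [sub_mulVec, hAx, Pi.sub_apply] at this
    linarith
  have hmono : ∀ u, (∀ i, 0 ≤ (T *ᵥ u) i) → ∀ i, 0 ≤ u i := fun u hu =>
    nonneg_of_mulVec_nonneg hT hx hTx hu
  have hTunit : IsUnit T := by
    refine mulVec_injective_iff_isUnit.mp fun u w huw => funext fun i => ?_
    have h1 := hmono (u - w) (by simp [mulVec_sub, huw]) i
    have h2 := hmono (w - u) (by simp [mulVec_sub, huw]) i
    simp only [Pi.sub_apply] at h1 h2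
    linarith
  refine ⟨hTunit, fun i j => ?_⟩
  have hcol : T *ᵥ (T⁻¹ *ᵥ Pi.single j (1 : ℝ)) = Pi.single j 1 := by
    rw [mulVec_mulVec, mul_nonsing_inv _ ((isUnit_iff_isUnit_det T).mp hTunit), one_mulVec]
  have := hmono _ (fun k => by rw [hcol, Pi.single_apply]; split_ifs <;> norm_num) i
  rwa [mulVec_single_one, col_apply] at this

theorem norm_lt_one_of_mulVec_lt {B : Matrix ι ι ℂ} {M : Matrix ι ι ℝ} {x : ι → ℝ}
    (hBM : ∀ i j, ‖B i j‖ ≤ M i j) (hx : ∀ i, 0 < x i) (hMx : ∀ i, (M *ᵥ x) i < x i)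
    {μ : ℂ} {v : ι → ℂ} (hv : v ≠ 0) (hμ : B *ᵥ v = μ • v) : ‖μ‖ < 1 := by
  by_contra! hμ1
  set u : ι → ℝ := fun i => ‖v i‖
  have hu : ∀ i, u i ≤ (M *ᵥ u) i := fun i => calc
    u i ≤ ‖μ‖ * u i := le_mul_of_one_le_left (norm_nonneg _) hμ1
    _ = ‖(B *ᵥ v) i‖ := by rw [hμ, Pi.smul_apply, smul_eq_mul, norm_mul]
    _ ≤ ∑ j, ‖B i j‖ * u j := (norm_sum_le _ _).trans_eq (by simp only [norm_mul, u])
    _ ≤ (M *ᵥ u) i := sum_le_sum fun j _ => mul_le_mul_of_nonneg_right (hBM i j) (norm_nonneg _)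
  have hZ : ∀ i j, i ≠ j → (1 - M) i j ≤ 0 := fun i j hij => by
    simpa [one_apply_ne hij] using (norm_nonneg _).trans (hBM i j)
  have hpos : ∀ i, 0 < ((1 - M) *ᵥ x) i := fun i => by
    simpa [sub_mulVec] using hMx i
  have hu0 : ∀ i, 0 ≤ -u i := nonneg_of_mulVec_nonneg hZ hx hpos (u := -u) fun i => by
    simpa [sub_mulVec, mulVec_neg] using hu i
  exact hv (funext fun i => norm_eq_zero.mp ((neg_nonneg.mp (hu0 i)).antisymm (norm_nonneg _)))

theorem norm_lt_one_of_regular_splitting {A T N : Matrix ι ι ℝ} (hA : IsUnit A)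
    (hAinv : ∀ i j, 0 ≤ A⁻¹ i j) (hT : IsUnit T) (hTinv : ∀ i j, 0 ≤ T⁻¹ i j)
    (hN : ∀ i j, 0 ≤ N i j) (hATN : A = T - N) {μ : ℂ} {v : ι → ℂ} (hv : v ≠ 0)
    (hμ : (T⁻¹ * N).map Complex.ofReal *ᵥ v = μ • v) : ‖μ‖ < 1 := by
  set x := A⁻¹ *ᵥ fun _ => (1 : ℝ)
  have hx : ∀ i, 0 < x i := mulVec_pos_of_isUnit_of_nonneg (isUnit_nonsing_inv_iff.mpr hA) hAinv
    fun _ => one_pos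
  have hGx : x - (T⁻¹ * N) *ᵥ x = T⁻¹ *ᵥ fun _ => 1 := by
    have hAx : A *ᵥ x = fun _ => 1 := by
      rw [mulVec_mulVec, mul_nonsing_inv _ ((isUnit_iff_isUnit_det A).mp hA), one_mulVec]
    calc x - (T⁻¹ * N) *ᵥ x = (T⁻¹ * (T - N)) *ᵥ x := by
          rw [Matrix.mul_sub, nonsing_inv_mul _ ((isUnit_iff_isUnit_det T).mp hT), sub_mulVec,
            one_mulVec]
      _ = T⁻¹ *ᵥ fun _ => 1 := by rw [← hATN, ← mulVec_mulVec, hAx]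
  refine norm_lt_one_of_mulVec_lt (M := T⁻¹ * N) (x := x)
    (fun i j => by simp [abs_of_nonneg (mul_apply_nonneg hTinv hN i j)]) hx (fun i => ?_) hv hμ
  have := mulVec_pos_of_isUnit_of_nonneg (isUnit_nonsing_inv_iff.mpr hT) hTinv (fun _ => one_pos) i
  rw [← hGx, Pi.sub_apply] at this
  linarith

theorem mem_spectrum_iff_exists_mulVec_eq_smul {K : Type*} [Field K] {M : Matrix ι ι K}
    {μ : K} : μ ∈ spectrum K M ↔ ∃ v ≠ 0, M *ᵥ v = μ • v := by
  rw [← spectrum_toLin', ← Module.End.hasEigenvalue_iff_mem_spectrum]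
  constructor
  · intro h
    obtain ⟨v, hv⟩ := h.exists_hasEigenvector
    exact ⟨v, hv.2, by simpa using hv.apply_eq_smul⟩
  · rintro ⟨v, hv, hMv⟩
    exact Module.End.hasEigenvalue_of_hasEigenvector
      (Module.End.hasEigenvector_iff.mpr ⟨by simpa [Module.End.mem_eigenspace_iff] using hMv, hv⟩)

theorem norm_pow_apply_le {R : Type*} [NormedRing R] [NormOneClass R] {B : Matrix ι ι R}
    {M : Matrix ι ι ℝ} (hBM : ∀ i j, ‖B i j‖ ≤ M i j) (k : ℕ) (i j : ι) :
    ‖(B ^ k) i j‖ ≤ (M ^ k) i j := by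
  induction k generalizing i j with
  | zero => rcases eq_or_ne i j with rfl | hij <;> simp [*]
  | succ k ih => rw [pow_succ, pow_succ]; exact norm_mul_apply_le ih hBM i j


section LinftyOpNorm

attribute [local instance] Matrix.linftyOpNormedRing Matrix.linftyOpNormedAlgebra

theorem linfty_opNNNorm_le_of_norm_le {A B : Matrix ι ι ℂ} (h : ∀ i j, ‖A i j‖ ≤ ‖B i j‖) :
    ‖A‖₊ ≤ ‖B‖₊ := by
  rw [linfty_opNNNorm_def, linfty_opNNNorm_def]
  exact Finset.sup_mono_fun fun i _ => sum_le_sum fun j _ => h i j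

theorem spectralRadius_le_of_norm_apply_le {B : Matrix ι ι ℂ} {M : Matrix ι ι ℝ}
    (hBM : ∀ i j, ‖B i j‖ ≤ M i j) :
    spectralRadius ℂ B ≤ spectralRadius ℂ (M.map Complex.ofReal) := by
  refine spectrum.spectralRadius_le_of_forall_nnnorm_pow_le fun k =>
    linfty_opNNNorm_le_of_norm_le fun i j => ?_
  have hpow : (M ^ k).map Complex.ofReal = M.map Complex.ofReal ^ k :=
    Matrix.map_pow M Complex.ofRealHom k
  rw [← hpow, map_apply, Complex.norm_real, Real.norm_eq_abs]
  exact (norm_pow_apply_le hBM k i j).trans (le_abs_self _)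

theorem exists_mulVec_eq_smul_nnnorm_eq_spectralRadius [Nonempty ι] (M : Matrix ι ι ℂ) :
    ∃ μ : ℂ, (∃ v ≠ 0, M *ᵥ v = μ • v) ∧ (‖μ‖₊ : ℝ≥0∞) = spectralRadius ℂ M := by
  obtain ⟨μ, hμ, hρ⟩ := spectrum.exists_nnnorm_eq_spectralRadius M
  exact ⟨μ, mem_spectrum_iff_exists_mulVec_eq_smul.mp hμ, hρ⟩

end LinftyOpNorm

theorem spectralRadius_add_smul_le {X Y : Matrix ι ι ℝ} (hX : ∀ i j, 0 ≤ X i j)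
    (hY : ∀ i j, 0 ≤ Y i j) {s : ℂ} (hs : ‖s‖ ≤ 1) :
    spectralRadius ℂ (Y.map Complex.ofReal + s • X.map Complex.ofReal) ≤
      spectralRadius ℂ ((Y + X).map Complex.ofReal) :=
  spectralRadius_le_of_norm_apply_le fun i j => by
    simp only [add_apply, smul_apply, map_apply, smul_eq_mul]
    refine (norm_add_le _ _).trans ?_
    rw [norm_mul, Complex.norm_real, Complex.norm_real, Real.norm_of_nonneg (hY i j),
      Real.norm_of_nonneg (hX i j)]
    nlinarith [hX i j]

end Matrix

theorem apply_nonneg_of_eq_ite_neg {ι : Type*} {A E : Matrix ι ι ℝ} {p : ι → ι → Prop}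
    [DecidableRel p] (hZ : ∀ i j, i ≠ j → A i j ≤ 0) (hp : ∀ i j, p i j → i ≠ j)
    (hE : ∀ i j, E i j = if p i j then -A i j else 0) (i j : ι) : 0 ≤ E i j := by
  rw [hE]
  split_ifs with h
  exacts [neg_nonneg.mpr (hZ i j (hp i j h)), le_rfl]

section Banded

variable {n m : ℕ} {A T E F : Matrix (Fin n) (Fin n) ℝ}

theorem banded_offDiag_nonpos (hZ : ∀ i j, i ≠ j → A i j ≤ 0)
    (hT : ∀ i j, T i j = if |(i : ℤ) - (j : ℤ)| ≤ (m : ℤ) then A i j else 0) (i j : Fin n)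
    (hij : i ≠ j) : T i j ≤ 0 := by
  rw [hT]
  split_ifs
  exacts [hZ i j hij, le_rfl]

theorem banded_eq_sub_sub
    (hT : ∀ i j, T i j = if |(i : ℤ) - (j : ℤ)| ≤ (m : ℤ) then A i j else 0)
    (hE : ∀ i j, E i j = if (j : ℤ) + (m : ℤ) < (i : ℤ) then -A i j else 0)
    (hF : ∀ i j, F i j = if (i : ℤ) + (m : ℤ) < (j : ℤ) then -A i j else 0) :
    A = T - E - F := by
  ext i j
  simp only [Matrix.sub_apply, hT, hE, hF, abs_le]
  split_ifs <;> first | omega | ring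

end Banded

section GSOR

variable {ι : Type*} [Fintype ι] [DecidableEq ι]

theorem isUnit_sub_smul_of_forall_norm_lt {T E : Matrix ι ι ℝ} {ω : ℝ} (hT : IsUnit T)
    (hω : 0 < ω) (hTE : ∀ (lam : ℂ) (v : ι → ℂ), v ≠ 0 →
      (T⁻¹ * E).map Complex.ofReal *ᵥ v = lam • v → ‖lam‖ < 1 / ω) :
    IsUnit (T - ω • E) := by
  rw [isUnit_iff_isUnit_det, isUnit_iff_ne_zero]
  intro hdet
  obtain ⟨w, hw, hTw⟩ := exists_mulVec_eq_zero_iff.mpr hdet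
  have heig : (T⁻¹ * E) *ᵥ w = ω⁻¹ • w := by
    have h : T⁻¹ *ᵥ ((T - ω • E) *ᵥ w) = T⁻¹ *ᵥ 0 := by rw [hTw]
    rw [mulVec_mulVec, Matrix.mul_sub, nonsing_inv_mul _ ((isUnit_iff_isUnit_det T).mp hT),
      Matrix.mul_smul, sub_mulVec, one_mulVec, smul_mulVec, mulVec_zero, sub_eq_zero] at h
    conv_rhs => rw [h, smul_smul, inv_mul_cancel₀ hω.ne', one_smul]
  have hwℂ : (fun i => (w i : ℂ)) ≠ 0 := fun h =>
    hw (funext fun i => by simpa using congrFun h i)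
  have := hTE (ω⁻¹ : ℝ) _ hwℂ (funext fun i => by
    simpa [mulVec, dotProduct] using congrArg Complex.ofReal (congrFun heig i))
  rw [Complex.norm_real, Real.norm_of_nonneg (inv_nonneg.mpr hω.le), one_div] at this
  exact lt_irrefl _ this

theorem mulVec_eq_smul_of_gsor_mulVec_eq_smul {T E F : Matrix ι ι ℝ} {ω : ℝ} (hT : IsUnit T)
    (hW : IsUnit (T - ω • E)) (hω : ω ≠ 0) {lam : ℂ} (hlam : lam ≠ 0) {v : ι → ℂ}
    (hv : ((T - ω • E)⁻¹ * ((1 - ω) • T + ω • F)).map Complex.ofReal *ᵥ v = lam • v) :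
    ((T⁻¹ * E).map Complex.ofReal + lam⁻¹ • (T⁻¹ * F).map Complex.ofReal) *ᵥ v =
      ((lam + ω - 1) / (lam * ω)) • v := by
  have hTdet := (isUnit_iff_isUnit_det T).mp hT
  have hsplit : (1 - ω) • 1 + ω • (T⁻¹ * F) =
      (1 - ω • (T⁻¹ * E)) * ((T - ω • E)⁻¹ * ((1 - ω) • T + ω • F)) := by
    have h1 : 1 - ω • (T⁻¹ * E) = T⁻¹ * (T - ω • E) := by
      rw [Matrix.mul_sub, nonsing_inv_mul _ hTdet, Matrix.mul_smul]
    rw [h1, Matrix.mul_assoc, ← Matrix.mul_assoc (T - ω • E),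
      mul_nonsing_inv _ ((isUnit_iff_isUnit_det _).mp hW), Matrix.one_mul, Matrix.mul_add,
      Matrix.mul_smul, Matrix.mul_smul, nonsing_inv_mul _ hTdet]
  generalize T⁻¹ * E = Y, T⁻¹ * F = X, (T - ω • E)⁻¹ * ((1 - ω) • T + ω • F) = H at hsplit hv ⊢
  have hsplitℂ := congrArg (fun M => Complex.ofRealAm.mapMatrix M *ᵥ v) hsplit
  simp only [map_add, map_sub, map_smul, map_one, map_mul, AlgHom.mapMatrix_apply,
    Complex.ofRealAm_coe, ← mulVec_mulVec] at hsplitℂ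
  rw [hv] at hsplitℂ
  ext i
  have hi := congrFun hsplitℂ i
  simp only [add_mulVec, sub_mulVec, smul_mulVec, one_mulVec, mulVec_smul, Pi.add_apply,
    Pi.sub_apply, Pi.smul_apply, Complex.real_smul, smul_eq_mul] at hi ⊢
  have hωℂ : (ω : ℂ) ≠ 0 := Complex.ofReal_ne_zero.mpr hω
  push_cast at hi
  field_simp
  linear_combination hi

theorem nnnorm_le_spectralRadius_of_gsor_mulVec_eq_smul {T E F : Matrix ι ι ℝ} {ω : ℝ}
    (hT : IsUnit T) (hTinv : ∀ i j, 0 ≤ T⁻¹ i j) (hE : ∀ i j, 0 ≤ E i j)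
    (hF : ∀ i j, 0 ≤ F i j) (hW : IsUnit (T - ω • E)) (hω : ω ≠ 0) {lam : ℂ}
    (hlam : 1 ≤ ‖lam‖) {v : ι → ℂ} (hv : v ≠ 0)
    (heig : ((T - ω • E)⁻¹ * ((1 - ω) • T + ω • F)).map Complex.ofReal *ᵥ v = lam • v) :
    (‖(lam + ω - 1) / (lam * ω)‖₊ : ℝ≥0∞) ≤
      spectralRadius ℂ ((T⁻¹ * (E + F)).map Complex.ofReal) := by
  have hmem := mem_spectrum_iff_exists_mulVec_eq_smul.mpr ⟨v, hv,
    mulVec_eq_smul_of_gsor_mulVec_eq_smul hT hW hω (norm_pos_iff.mp (one_pos.trans_le hlam)) heig⟩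
  rw [Matrix.mul_add]
  exact (le_iSup₂ (α := ℝ≥0∞) _ hmem).trans <| spectralRadius_add_smul_le
    (mul_apply_nonneg hTinv hF) (mul_apply_nonneg hTinv hE)
    (by rw [norm_inv]; exact inv_le_one_of_one_le₀ hlam)

end GSOR

theorem lt_norm_add_sub_one_div_of_one_le_norm {lam : ℂ} {ω c : ℝ} (hlam : 1 ≤ ‖lam‖)
    (hω : 0 < ω) (hc : c < 1) (hωc : ω * (1 + c) < 2) : c < ‖(lam + ω - 1) / (lam * ω)‖ := by
  have hlam0 : 0 < ‖lam‖ := one_pos.trans_le hlam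
  rw [norm_div, norm_mul, Complex.norm_real, Real.norm_of_nonneg hω.le,
    lt_div_iff₀ (by positivity)]
  have htri : ‖lam‖ - |1 - ω| ≤ ‖lam + ω - 1‖ := by
    have := norm_sub_norm_le lam ((1 - ω : ℝ) : ℂ)
    rwa [Complex.norm_real, Real.norm_eq_abs, Complex.ofReal_sub, Complex.ofReal_one,
      sub_sub_eq_add_sub] at this
  have hω1 : |1 - ω| < 1 - ω * c := by
    rcases abs_cases (1 - ω) with ⟨h1, _⟩ | ⟨h1, _⟩ <;> rw [h1] <;> nlinarith
  nlinarith [mul_nonneg (sub_nonneg.mpr hlam) (abs_nonneg (1 - ω))]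

theorem gsor_converges_of_Mmatrix_large_omega_general (n m : ℕ)
    (A T E F : Matrix (Fin n) (Fin n) ℝ) (ω r : ℝ)
    (hZ : ∀ i j, i ≠ j → A i j ≤ 0)
    (hA : IsUnit A)
    (hAinv : ∀ i j, 0 ≤ A⁻¹ i j)
(hT : ∀ i j, T i j = if |(i : ℤ) - (j : ℤ)| ≤ (m : ℤ) then A i j else 0)
    (hE : ∀ i j, E i j = if (j : ℤ) + (m : ℤ) < (i : ℤ) then -A i j else 0)
    (hF : ∀ i j, F i j = if (i : ℤ) + (m : ℤ) < (j : ℤ) then -A i j else 0)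
    (hGJ : ∀ (lam : ℂ) (v : Fin n → ℂ), v ≠ 0 →
      ((T⁻¹ * (E + F)).map (Complex.ofReal)).mulVec v = lam • v →
      ‖lam‖ ≤ r)
    (hω0 : 0 < ω) (hω2 : ω < 2 / (1 + r))
    (hTE : ∀ (lam : ℂ) (v : Fin n → ℂ), v ≠ 0 →
      ((T⁻¹ * E).map (Complex.ofReal)).mulVec v = lam • v →
      ‖lam‖ < 1 / ω) :
    IsUnit (T - ω • E) ∧
      ∀ (lam : ℂ) (v : Fin n → ℂ), v ≠ 0 →
        (((T - ω • E)⁻¹ * ((1 - ω) • T + ω • F)).map (Complex.ofReal)).mulVec v = lam • v →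
        ‖lam‖ < 1 := by
  have hE0 := apply_nonneg_of_eq_ite_neg hZ (fun i j h hij => by subst hij; omega) hE
  have hF0 := apply_nonneg_of_eq_ite_neg hZ (fun i j h hij => by subst hij; omega) hF
  have hsplit : A = T - (E + F) := by rw [← sub_sub]; exact banded_eq_sub_sub hT hE hF
  obtain ⟨hTunit, hTinv⟩ := isUnit_and_inv_nonneg_of_le hA hAinv (banded_offDiag_nonpos hZ hT)
    fun i j => by rw [hsplit, Matrix.sub_apply, Matrix.add_apply]; linarith [hE0 i j, hF0 i j]
  have hW := isUnit_sub_smul_of_forall_norm_lt hTunit hω0 hTE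
  refine ⟨hW, fun lam v hv hlam => ?_⟩
  obtain ⟨i, -⟩ := Function.ne_iff.mp hv
  have : Nonempty (Fin n) := ⟨i⟩
  obtain ⟨μ, ⟨u, hu, hGu⟩, hρ⟩ :=
    exists_mulVec_eq_smul_nnnorm_eq_spectralRadius ((T⁻¹ * (E + F)).map Complex.ofReal)
  have hμ1 : ‖μ‖ < 1 := norm_lt_one_of_regular_splitting hA hAinv hTunit hTinv
    (fun i j => add_nonneg (hE0 i j) (hF0 i j)) hsplit hu hGu
  have hμr : ‖μ‖ ≤ r := hGJ μ u hu hGu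
  by_contra! hlam1
  have hν := nnnorm_le_spectralRadius_of_gsor_mulVec_eq_smul hTunit hTinv hE0 hF0 hW hω0.ne'
    hlam1 hv hlam
  rw [← hρ, ENNReal.coe_le_coe, ← NNReal.coe_le_coe, coe_nnnorm, coe_nnnorm] at hν
  have hωr : ω * (1 + r) < 2 := (lt_div_iff₀ (by linarith [norm_nonneg μ])).mp hω2
  exact (lt_norm_add_sub_one_div_of_one_le_norm hlam1 hω0 hμ1 (by nlinarith)).not_ge hν

/-- Generalized SOR converges for nonsingular M-matrices when
0 < ω < 2/(1 + ρ(H_GJ)) and ρ(T_m⁻¹E_m) < 1/ω. -/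
theorem gsor_converges_of_Mmatrix_large_omega (n m : ℕ) (hm : m < n)
    (A T E F : Matrix (Fin n) (Fin n) ℝ) (ω r : ℝ)
    (hZ : ∀ i j, i ≠ j → A i j ≤ 0)
    (hA : IsUnit A)
    (hAinv : ∀ i j, 0 ≤ A⁻¹ i j)
(hT : ∀ i j, T i j = if |(i : ℤ) - (j : ℤ)| ≤ (m : ℤ) then A i j else 0)
    (hE : ∀ i j, E i j = if (j : ℤ) + (m : ℤ) < (i : ℤ) then -A i j else 0)
    (hF : ∀ i j, F i j = if (i : ℤ) + (m : ℤ) < (j : ℤ) then -A i j else 0)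
    (hr : 0 ≤ r)
    (hGJ : ∀ (lam : ℂ) (v : Fin n → ℂ), v ≠ 0 →
      ((T⁻¹ * (E + F)).map (Complex.ofReal)).mulVec v = lam • v →
      ‖lam‖ ≤ r)
    (hω0 : 0 < ω) (hω2 : ω < 2 / (1 + r))
    (hTE : ∀ (lam : ℂ) (v : Fin n → ℂ), v ≠ 0 →
      ((T⁻¹ * E).map (Complex.ofReal)).mulVec v = lam • v →
      ‖lam‖ < 1 / ω) :
    IsUnit (T - ω • E) ∧
      ∀ (lam : ℂ) (v : Fin n → ℂ), v ≠ 0 →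
        (((T - ω • E)⁻¹ * ((1 - ω) • T + ω • F)).map (Complex.ofReal)).mulVec v = lam • v →
        ‖lam‖ < 1 :=
  gsor_converges_of_Mmatrix_large_omega_general n m A T E F ω r hZ hA hAinv hT hE hF hGJ hω0 hω2 hTE
end

section
/- Let A be an n×n real H-matrix, i.e. its comparison matrix M(A), defined by M(A)_{ii} = |a_{ii}| and M(A)_{ij} = −|a_{ij}| for i ≠ j, is a nonsingular M-matrix. Fix m < n with banded decomposition A = T_m − E_m − F_m, and let 0 < ω ≤ 1. Then T_m − ω E_m is invertible and every complex eigenvalue λ of the GSOR iteration matrix (T_m − ω E_m)⁻¹[(1−ω)T_m + ω F_m] satisfies |λ| < 1 (the generalized SOR method converges for every initial guess). -/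
open Matrix Finset

/-!
Since `M(A)` is a nonsingular M-matrix, `u = M(A)⁻¹ 𝟙` is a positive vector with `M(A) u = 𝟙`,
i.e. `A` is strictly diagonally dominant once its columns are scaled by `u`. Every combination
`a T + b E + c F` with `‖b‖, ‖c‖ ≤ ‖a‖` inherits this dominance: its diagonal is `a · diag A` and
its other entries are bounded by `‖a‖ |aᵢⱼ|`. By Levy–Desplanques such a matrix is nonsingular.
With `(a, b, c) = (1, -ω, 0)` this is `T - ω E`. An eigenpair `(λ, v)` of the GSOR matrix gives
`((λ - 1 + ω) T - λ ω E - ω F) v = 0`, and if `|λ| ≥ 1` then `|λ| ω ≤ |λ - 1 + ω|` and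
`ω ≤ |λ - 1 + ω|`, so that matrix is nonsingular and `v = 0`.
-/

namespace Matrix

variable {ι α β 𝕜 : Type*} [Fintype ι] [DecidableEq ι]

def IsWeightedDiagDominant [Norm α] (B : Matrix ι ι α) (u : ι → ℝ) : Prop :=
  ∀ i, ∑ j ∈ univ.erase i, ‖B i j‖ * u j < ‖B i i‖ * u i

theorem IsWeightedDiagDominant.det_ne_zero [RCLike 𝕜] {B : Matrix ι ι 𝕜} {u : ι → ℝ}
    (hB : B.IsWeightedDiagDominant u) (hu : ∀ i, 0 < u i) : B.det ≠ 0 := by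
  have hscaled : (B * diagonal fun j => (u j : 𝕜)).det ≠ 0 := by
    refine det_ne_zero_of_sum_row_lt_diag fun i => ?_
    simpa [mul_diagonal, norm_mul, abs_of_pos (hu _)] using hB i
  rw [det_mul] at hscaled
  exact left_ne_zero_of_mul hscaled

theorem IsWeightedDiagDominant.map [Norm α] [Norm β] {A : Matrix ι ι α} {u : ι → ℝ}
    (hA : A.IsWeightedDiagDominant u) {f : α → β} (hf : ∀ x, ‖f x‖ = ‖x‖) :
    (A.map f).IsWeightedDiagDominant u := fun i => by
  simpa only [map_apply, hf] using hA i

theorem IsWeightedDiagDominant.of_norm_le [Norm α] [Norm β] {A : Matrix ι ι α}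
    {B : Matrix ι ι β} {u : ι → ℝ} {k : ℝ} (hA : A.IsWeightedDiagDominant u)
    (hu : ∀ i, 0 ≤ u i) (hk : 0 < k) (hdiag : ∀ i, k * ‖A i i‖ ≤ ‖B i i‖)
    (hoff : ∀ i j, i ≠ j → ‖B i j‖ ≤ k * ‖A i j‖) : B.IsWeightedDiagDominant u := fun i =>
  calc ∑ j ∈ univ.erase i, ‖B i j‖ * u j
      ≤ ∑ j ∈ univ.erase i, k * (‖A i j‖ * u j) := sum_le_sum fun j hj => by
        rw [← mul_assoc]
        exact mul_le_mul_of_nonneg_right (hoff i j (ne_of_mem_erase hj).symm) (hu j)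
    _ = k * ∑ j ∈ univ.erase i, ‖A i j‖ * u j := (mul_sum _ _ _).symm
    _ < k * (‖A i i‖ * u i) := mul_lt_mul_of_pos_left (hA i) hk
    _ ≤ ‖B i i‖ * u i := by
        rw [← mul_assoc]
        exact mul_le_mul_of_nonneg_right (hdiag i) (hu i)

theorem isWeightedDiagDominant_of_comparison {A M : Matrix ι ι ℝ}
    (hM : ∀ i j, M i j = if i = j then |A i i| else -|A i j|) {u : ι → ℝ}
    (hMu : ∀ i, 0 < (M *ᵥ u) i) : A.IsWeightedDiagDominant u := fun i => by
  have hrow := hMu i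
  rw [mulVec, dotProduct, ← add_sum_erase _ _ (mem_univ i), hM, if_pos rfl,
    sum_congr rfl fun j hj => by rw [hM, if_neg (ne_of_mem_erase hj).symm]] at hrow
  simp only [Real.norm_eq_abs, neg_mul, sum_neg_distrib] at hrow ⊢
  linarith

theorem exists_pos_mulVec_eq_one_of_nonneg_inv {R : Type*} [Field R] [LinearOrder R]
    [IsStrictOrderedRing R] {M : Matrix ι ι R} (hM : IsUnit M) (hinv : ∀ i j, 0 ≤ M⁻¹ i j) :
    ∃ u : ι → R, (∀ i, 0 < u i) ∧ M *ᵥ u = 1 := by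
  have hdet := (isUnit_iff_isUnit_det M).mp hM
  refine ⟨M⁻¹ *ᵥ 1, fun i => ?_, by rw [mulVec_mulVec, mul_nonsing_inv _ hdet, one_mulVec]⟩
  have hrow : M⁻¹ i ≠ 0 := fun h => by
    simpa [mul_apply, h] using congrFun (congrFun (nonsing_inv_mul M hdet) i) i
  obtain ⟨j, hj⟩ := Function.ne_iff.mp hrow
  calc 0 < M⁻¹ i j := (hinv i j).lt_of_ne' hj
    _ ≤ ∑ k, M⁻¹ i k := single_le_sum (fun k _ => hinv i k) (mem_univ j)
    _ = (M⁻¹ *ᵥ 1) i := by simp [mulVec, dotProduct]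

theorem mulVec_eq_zero_of_nonsing_inv_mul_map_mulVec_eq_smul {R S : Type*} [CommRing R]
    [CommRing S] (f : R →+* S) {X N : Matrix ι ι R} (hX : IsUnit X) {v : ι → S} {lam : S}
    (h : ((X⁻¹ * N).map f) *ᵥ v = lam • v) : (lam • X.map f - N.map f) *ᵥ v = 0 := by
  have hN : N.map f = X.map f * (X⁻¹ * N).map f := by
    rw [← Matrix.map_mul, ← mul_assoc, mul_nonsing_inv _ ((isUnit_iff_isUnit_det X).mp hX),
      one_mul]
  rw [sub_mulVec, smul_mulVec, hN, ← mulVec_mulVec, h, mulVec_smul, sub_self]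

variable {n : ℕ} {R : Type*}

def IsBandSplitting [Ring R] (m : ℕ) (A T E F : Matrix (Fin n) (Fin n) R) : Prop :=
  (∀ i j, T i j = if |(i : ℤ) - (j : ℤ)| ≤ (m : ℤ) then A i j else 0) ∧
  (∀ i j, E i j = if (j : ℤ) + (m : ℤ) < (i : ℤ) then -A i j else 0) ∧
  (∀ i j, F i j = if (i : ℤ) + (m : ℤ) < (j : ℤ) then -A i j else 0)

namespace IsBandSplitting

theorem map {S : Type*} [Ring R] [Ring S] {m : ℕ} {A T E F : Matrix (Fin n) (Fin n) R}
    (h : IsBandSplitting m A T E F) (f : R →+* S) :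
    IsBandSplitting m (A.map f) (T.map f) (E.map f) (F.map f) :=
  ⟨fun i j => by simp [h.1 i j, apply_ite f], fun i j => by simp [h.2.1 i j, apply_ite f],
    fun i j => by simp [h.2.2 i j, apply_ite f]⟩

variable [NormedField 𝕜] {m : ℕ} {A T E F : Matrix (Fin n) (Fin n) 𝕜}

theorem smul_add_apply_diag (h : IsBandSplitting m A T E F) (a b c : 𝕜) (i : Fin n) :
    (a • T + b • E + c • F) i i = a * A i i := by
  simp [h.1 i i, h.2.1 i i, h.2.2 i i, (Int.natCast_nonneg m).not_gt]

theorem norm_smul_add_apply_le (h : IsBandSplitting m A T E F) {a b c : 𝕜} (hb : ‖b‖ ≤ ‖a‖)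
    (hc : ‖c‖ ≤ ‖a‖) (i j : Fin n) : ‖(a • T + b • E + c • F) i j‖ ≤ ‖a‖ * ‖A i j‖ := by
  simp only [Matrix.add_apply, Matrix.smul_apply, smul_eq_mul, h.1 i j, h.2.1 i j, h.2.2 i j]
  -- `omega` discards the combinations of band conditions that cannot hold together
  split_ifs <;> rw [abs_le] at * <;>
    simp only [mul_zero, add_zero, zero_add, mul_neg, norm_neg, norm_mul] <;>
    first | omega | exact le_rfl | exact mul_le_mul_of_nonneg_right ‹_› (norm_nonneg _)

theorem isWeightedDiagDominant_smul_add (h : IsBandSplitting m A T E F) {u : Fin n → ℝ}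
    (hA : A.IsWeightedDiagDominant u) (hu : ∀ i, 0 ≤ u i) {a b c : 𝕜} (ha : a ≠ 0)
    (hb : ‖b‖ ≤ ‖a‖) (hc : ‖c‖ ≤ ‖a‖) : (a • T + b • E + c • F).IsWeightedDiagDominant u :=
  hA.of_norm_le hu (norm_pos_iff.2 ha) (fun i => by rw [h.smul_add_apply_diag, norm_mul])
    fun i j _ => h.norm_smul_add_apply_le hb hc i j

end IsBandSplitting

end Matrix

theorem Complex.norm_mul_le_norm_sub_one_add {lam : ℂ} {ω : ℝ} (hlam : 1 ≤ ‖lam‖) (hω : ω ≤ 1) :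
    ‖lam‖ * ω ≤ ‖lam - 1 + ω‖ := by
  have h1ω : ‖((1 - ω : ℝ) : ℂ)‖ = 1 - ω := by
    rw [Complex.norm_real, Real.norm_of_nonneg (by linarith)]
  calc ‖lam‖ * ω ≤ ‖lam‖ - (1 - ω) := by nlinarith
    _ = ‖lam‖ - ‖((1 - ω : ℝ) : ℂ)‖ := by rw [h1ω]
    _ ≤ ‖lam - ((1 - ω : ℝ) : ℂ)‖ := norm_sub_norm_le _ _
    _ = ‖lam - 1 + ω‖ := by push_cast; ring_nf

theorem gsor_converges_of_Hmatrix_general (n m : ℕ)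
    (A MA T E F : Matrix (Fin n) (Fin n) ℝ) (ω : ℝ)
    (hω0 : 0 < ω) (hω1 : ω ≤ 1)
    (hMA : ∀ i j, MA i j = if i = j then |A i i| else -|A i j|)
    (hMAunit : IsUnit MA)
    (hMAinv : ∀ i j, 0 ≤ MA⁻¹ i j)
(hT : ∀ i j, T i j = if |(i : ℤ) - (j : ℤ)| ≤ (m : ℤ) then A i j else 0)
    (hE : ∀ i j, E i j = if (j : ℤ) + (m : ℤ) < (i : ℤ) then -A i j else 0)
    (hF : ∀ i j, F i j = if (i : ℤ) + (m : ℤ) < (j : ℤ) then -A i j else 0) :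
    IsUnit (T - ω • E) ∧
      ∀ (lam : ℂ) (v : Fin n → ℂ), v ≠ 0 →
        (((T - ω • E)⁻¹ * ((1 - ω) • T + ω • F)).map (Complex.ofReal)).mulVec v = lam • v →
        ‖lam‖ < 1 := by
  have hsplit : IsBandSplitting m A T E F := ⟨hT, hE, hF⟩
  obtain ⟨u, hu, hMAu⟩ := exists_pos_mulVec_eq_one_of_nonneg_inv hMAunit hMAinv
  have hA : A.IsWeightedDiagDominant u :=
    isWeightedDiagDominant_of_comparison hMA (by simp [hMAu])
  have hX : IsUnit (T - ω • E) := by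
    have hdom := hsplit.isWeightedDiagDominant_smul_add hA (fun i => (hu i).le) one_ne_zero
      (b := -ω) (c := 0) (by simp [abs_of_pos hω0, hω1]) (by simp)
    rw [isUnit_iff_isUnit_det, isUnit_iff_ne_zero,
      show T - ω • E = (1 : ℝ) • T + (-ω) • E + (0 : ℝ) • F by module]
    exact hdom.det_ne_zero hu
  refine ⟨hX, fun lam v hv heig => ?_⟩
  by_contra! hlam
  have hlamω := Complex.norm_mul_le_norm_sub_one_add hlam hω1
  have hω : ω ≤ ‖lam‖ * ω := le_mul_of_one_le_left hω0.le hlam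
  have hC := (hsplit.map Complex.ofRealHom).isWeightedDiagDominant_smul_add
    (hA.map Complex.norm_real) (fun i => (hu i).le) (a := lam - 1 + ω) (b := -(lam * ω))
    (c := -ω) (norm_pos_iff.1 (by linarith)) (by simpa [abs_of_pos hω0] using hlamω)
    (by simpa [abs_of_pos hω0] using hω.trans hlamω)
  have hker := mulVec_eq_zero_of_nonsing_inv_mul_map_mulVec_eq_smul Complex.ofRealHom hX heig
  have hcomb : lam • (T - ω • E).map Complex.ofRealHom
      - ((1 - ω) • T + ω • F).map Complex.ofRealHom
      = (lam - 1 + ω) • T.map Complex.ofRealHom + (-(lam * ω)) • E.map Complex.ofRealHom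
        + (-ω : ℂ) • F.map Complex.ofRealHom := by
    ext i j
    simp
    ring
  rw [hcomb] at hker
  exact hv (eq_zero_of_mulVec_eq_zero (hC.det_ne_zero hu) hker)

/-- Generalized SOR with 0 < ω ≤ 1 converges for H-matrices. -/
theorem gsor_converges_of_Hmatrix (n m : ℕ) (hm : m < n)
    (A MA T E F : Matrix (Fin n) (Fin n) ℝ) (ω : ℝ)
    (hω0 : 0 < ω) (hω1 : ω ≤ 1)
    (hMA : ∀ i j, MA i j = if i = j then |A i i| else -|A i j|)
    (hMAunit : IsUnit MA)
    (hMAinv : ∀ i j, 0 ≤ MA⁻¹ i j)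
(hT : ∀ i j, T i j = if |(i : ℤ) - (j : ℤ)| ≤ (m : ℤ) then A i j else 0)
    (hE : ∀ i j, E i j = if (j : ℤ) + (m : ℤ) < (i : ℤ) then -A i j else 0)
    (hF : ∀ i j, F i j = if (i : ℤ) + (m : ℤ) < (j : ℤ) then -A i j else 0) :
    IsUnit (T - ω • E) ∧
      ∀ (lam : ℂ) (v : Fin n → ℂ), v ≠ 0 →
        (((T - ω • E)⁻¹ * ((1 - ω) • T + ω • F)).map (Complex.ofReal)).mulVec v = lam • v →
        ‖lam‖ < 1 :=
  gsor_converges_of_Hmatrix_general n m A MA T E F ω hω0 hω1 hMA hMAunit hMAinv hT hE hF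
end
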